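/- Let p be a prime and m ∈ ℕ. Let k, l' be natural numbers with p^m dividing k, k ≥ p^m, and 0 < l' < p^m. Then in ℚ(q) the identity ⟨k choose l'⟩_{(m),q} · ⟨k−l' choose k−p^m⟩_{(m),q} = ⟨k choose p^m⟩_{(m),q} · ⟨p^m choose l'⟩_{(m),q} holds. -/

import Mathlib

noncomputable section

open Polynomial

/-- `ℤ[q]`, the polynomial ring in one variable `q` over `ℤ`. -/
abbrev Zq : Type := Polynomial ℤ

/-- `ℚ(q)`, realized as the fraction field of `ℤ[q]`. -/
abbrev Qq : Type := FractionRing Zq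

/-- The canonical embedding `ℤ[q] → ℚ(q)`. -/
def ι : Zq →+* Qq := algebraMap Zq Qq

/-- The image of the variable `q` in `ℚ(q)`. -/
def qQ : Qq := ι X

/-- The `q^a`-integer `(n)_{q^a} = 1 + q^a + ⋯ + q^{a(n-1)}` in `ℤ[q]`. -/
def qInt (a n : ℕ) : Zq := ∑ j ∈ Finset.range n, X ^ (a * j)

/-- The `q^a`-factorial `(n)_{q^a}! = ∏_{i=1}^{n} (i)_{q^a}` in `ℤ[q]`. -/
def qFact (a n : ℕ) : Zq := ∏ i ∈ Finset.range n, qInt a (i + 1)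

/-- The prime ideal `(p, q - 1)` of `ℤ[q]`. -/
def pqIdeal (p : ℕ) : Ideal Zq := Ideal.span {C (p : ℤ), X - 1}

/-- Membership in the localization `ℤ[q]_{(p,q-1)}`, viewed inside `ℚ(q)`:
`x = a / b` with `b ∉ (p, q-1)`. -/
def InLoc (p : ℕ) (x : Qq) : Prop :=
  ∃ a b : Zq, b ∉ pqIdeal p ∧ x * ι b = ι a

/-- Being a unit of the localization `ℤ[q]_{(p,q-1)}`, viewed inside `ℚ(q)`:
`x = a / b` with `a, b ∉ (p, q-1)`. -/
def IsLocUnit (p : ℕ) (x : Qq) : Prop :=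
  ∃ a b : Zq, a ∉ pqIdeal p ∧ b ∉ pqIdeal p ∧ x * ι b = ι a

/-- The Gaussian `q`-binomial coefficient `(k choose k')_q` as an element of `ℚ(q)`. -/
def qBinomF (k k' : ℕ) : Qq :=
  ι (qFact 1 k) / (ι (qFact 1 k') * ι (qFact 1 (k - k')))

/-- The level-`m` coefficient `{k choose k'}_{(m),q}` as an element of `ℚ(q)`. -/
def braceC (p m k k' : ℕ) : Qq :=
  ι (qFact (p ^ m) (k / p ^ m)) /
    (ι (qFact (p ^ m) (k' / p ^ m)) * ι (qFact (p ^ m) ((k - k') / p ^ m)))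

/-- The level-`m` coefficient `⟨k choose k'⟩_{(m),q}` as an element of `ℚ(q)`. -/
def angleC (p m k k' : ℕ) : Qq := qBinomF k k' * (braceC p m k k')⁻¹


lemma qInt_ne_zero (a n : ℕ) (hn : 0 < n) : qInt a n ≠ 0 := by
  intro h
  have h2 := congrArg (Polynomial.eval 1) h
  simp [qInt, Polynomial.eval_finset_sum] at h2
  omega

lemma qFact_ne_zero (a n : ℕ) : qFact a n ≠ 0 :=
  Finset.prod_ne_zero_iff.mpr fun i _ => qInt_ne_zero a (i + 1) (by omega)

lemma iota_qFact_ne_zero (a n : ℕ) : ι (qFact a n) ≠ 0 :=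
  (map_ne_zero_iff ι (IsFractionRing.injective Zq Qq)).mpr (qFact_ne_zero a n)

lemma qFact_zero' (a : ℕ) : qFact a 0 = 1 := by simp [qFact]

lemma qFact_one' (a : ℕ) : qFact a 1 = 1 := by simp [qFact, qInt]

set_option synthInstance.maxHeartbeats 1000000 in
/-- For `p^m ∣ k`, `k ≥ p^m` and `0 < l' < p^m`:
`⟨k choose l'⟩_{(m),q} ⬝ ⟨k-l' choose k-p^m⟩_{(m),q}
  = ⟨k choose p^m⟩_{(m),q} ⬝ ⟨p^m choose l'⟩_{(m),q}`. -/
theorem stmt15 (p : ℕ) (hp : p.Prime) (m k l' : ℕ) (hk : p ^ m ∣ k) (hk' : p ^ m ≤ k)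
    (h1 : 0 < l') (h2 : l' < p ^ m) :
    angleC p m k l' * angleC p m (k - l') (k - p ^ m) =
      angleC p m k (p ^ m) * angleC p m (p ^ m) l' := by
  obtain ⟨r, rfl⟩ := hk
  have hP : 0 < p ^ m := pow_pos hp.pos m
  have hr : r ≠ 0 := by rintro rfl; omega
  obtain ⟨s, rfl⟩ := Nat.exists_eq_succ_of_ne_zero hr
  have d1 : p ^ m * (s + 1) / p ^ m = s + 1 := Nat.mul_div_cancel_left _ hP
  have d2 : l' / p ^ m = 0 := Nat.div_eq_of_lt h2
  have e3 : p ^ m * (s + 1) - l' = p ^ m * s + (p ^ m - l') := by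
    simp only [Nat.mul_succ]; omega
  have d3 : (p ^ m * (s + 1) - l') / p ^ m = s := by
    rw [e3, Nat.mul_add_div hP, Nat.div_eq_of_lt (by omega)]
    omega
  have e4 : p ^ m * (s + 1) - p ^ m = p ^ m * s := by
    simp only [Nat.mul_succ]; omega
  have d4 : (p ^ m * (s + 1) - p ^ m) / p ^ m = s := by
    rw [e4, Nat.mul_div_cancel_left _ hP]
  have d5 : p ^ m / p ^ m = 1 := Nat.div_self hP
  have d6 : (p ^ m - l') / p ^ m = 0 := Nat.div_eq_of_lt (by omega)
  have e7 : p ^ m * (s + 1) - l' - (p ^ m * (s + 1) - p ^ m) = p ^ m - l' := by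
    simp only [Nat.mul_succ]; omega
  have nz : ∀ a n, ι (qFact a n) ≠ 0 := iota_qFact_ne_zero
  simp only [angleC, qBinomF, braceC, d1, d2, d3, d4, d5, d6, e7,
    qFact_zero', qFact_one', map_one, one_mul, mul_one]
  field_simp [nz]
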